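/- For every integer m ≥ 1, every N ∈ ℕ and all constants c₀, c₁, c₃, λ, γ > 0, there exists B₀ > 0 with the following property: for every design problem (𝒳, ℬ, f, ℓ, (ξ[β])_{β∈ℬ}) as in the context that satisfies condition (2.9) with constant c₀, condition (2.5) with constant λ, and the exponential decay condition Q(β,β̃) ≤ c₁ exp(−|ℓ(β) − ℓ(β̃)|^γ) for all β, β̃ ∈ ℬ, and for every Borel probability measure π on ℬ satisfying π(S) ≥ c₃ μ_ℓ(S)/μ_ℓ(ℬ) for every Borel set S ⊆ ℬ (where μ_ℓ is the Lebesgue–Stieltjes measure of ℓ), if μ_ℓ(ℬ) = ℓ(β_max) − ℓ(β_min) ≥ B₀, then every design ξ* maximizing the Bayesian D-criterion Ψ_st(ξ) = ∫_ℬ log( det M(ξ,β) / det M(ξ[β],β) ) dπ(β) over all designs is supported at more than N points. -/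

import Mathlib

open scoped BigOperators ENNReal

/-- An approximate design: a finitely supported probability measure on `X`,
given by its support points and positive weights summing to one. -/
structure Design (X : Type*) where
  support : Finset X
  w : X → ℝ
  w_pos : ∀ x ∈ support, 0 < w x
  w_zero : ∀ x ∉ support, w x = 0
  sum_one : ∑ x ∈ support, w x = 1

/-- Information matrix `M(ξ,β) = ∑ₖ wₖ f(xₖ,β) f(xₖ,β)ᵀ`. -/
noncomputable def infoMat {X : Type*} {m : ℕ} (f : X → ℝ → Fin m → ℝ)
    (ξ : Design X) (β : ℝ) : Matrix (Fin m) (Fin m) ℝ :=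
  ∑ x ∈ ξ.support, ξ.w x • Matrix.vecMulVec (f x β) (f x β)

/-- `I_m(x₁,…,x_m,β) = det[f(x₁,β) ⋯ f(x_m,β)]²`. -/
noncomputable def detIm {X : Type*} {m : ℕ} (f : X → ℝ → Fin m → ℝ)
    (xs : Fin m → X) (β : ℝ) : ℝ :=
  (Matrix.det (Matrix.of fun i j => f (xs j) β i)) ^ 2

/-- `negLog r` is `−log r` as an extended nonnegative real, with value `∞` for `r ≤ 0`.
For an efficiency ratio `r ∈ [0,1]` this encodes the (possibly infinite) Bayesian loss
`−log r`, so that maximizing `Ψ_st(ξ) = ∫ log r dπ` (value `−∞` allowed) is the same as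
minimizing `∫⁻ negLog r dπ`. -/
noncomputable def negLog (r : ℝ) : ℝ≥0∞ :=
  if r ≤ 0 then ⊤ else ENNReal.ofReal (-Real.log r)

/-!
Two bounds on the Bayesian loss `−Ψ_st` compete. From above: by (2.5), the uniform mixture of
the local optima `ξ[β̃]` over a `λ`-grid of `ℓ`-values has efficiency at least `M⁻ᵐ / 2`
everywhere, with `M ≈ μ_ℓ(ℬ) / λ` grid points, so the optimal loss is `O(m log μ_ℓ(ℬ))`.
From below: if `ξ*` has at most `N` support points, Cauchy–Binet and (2.9) bound
`det M(ξ*, β)` by `c₀` times a sum of at most `K = (N + 1)ᵐ m` terms `det M(ξ[β̃], β)`. By the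
decay condition these are negligible unless `ℓ(β)` lies within `t = μ_ℓ(ℬ) / 4K` of one of the
`ℓ(β̃)`; the remaining `β` carry at least half of `μ_ℓ(ℬ)`, hence prior mass at least `c₃ / 2`,
so the loss of `ξ*` is of order `tᵞ`, which eventually beats the logarithm.
-/

open Matrix Finset Equiv
open scoped MatrixOrder

theorem Fintype.sum_piFinset_comp_perm {ι n M : Type*} [Fintype n] [DecidableEq n]
    [AddCommMonoid M] (s : Finset ι) (σ : Perm n) (g : (n → ι) → M) :
    ∑ φ ∈ piFinset (fun _ : n => s), g (φ ∘ σ) = ∑ φ ∈ piFinset (fun _ : n => s), g φ :=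
  sum_nbij' (· ∘ σ) (· ∘ σ.symm) (fun _ h => by simp_all [mem_piFinset])
    (fun _ h => by simp_all [mem_piFinset]) (by simp [Function.comp_assoc])
    (by simp [Function.comp_assoc]) (fun _ _ => rfl)

namespace Matrix

variable {n : Type*} [Fintype n] [DecidableEq n]

theorem PosSemidef.one_le_det_one_add {C : Matrix n n ℝ} (hC : C.PosSemidef) :
    1 ≤ (1 + C).det := by
  have hsa : IsSelfAdjoint C := hC.1
  have h : 1 + C = cfc (fun x : ℝ => 1 + x) C := by
    rw [cfc_add .., cfc_const_one .., cfc_id' ..]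
  rw [h, hC.1.cfc_eq]
  simp only [IsHermitian.cfc, RCLike.ofReal_real_eq_id, CompTriple.comp_eq, det_map,
    det_diagonal, Function.comp_apply]
  exact Finset.one_le_prod fun i _ => le_add_of_nonneg_right (hC.eigenvalues_nonneg i)

theorem PosSemidef.det_le_det_add {A B : Matrix n n ℝ} (hA : A.PosSemidef) (hB : B.PosSemidef) :
    A.det ≤ (A + B).det := by
  rcases eq_or_ne A.det 0 with hA0 | hA0
  · rw [hA0]
    exact (hA.add hB).det_nonneg
  obtain ⟨R, rfl⟩ := CStarAlgebra.nonneg_iff_eq_star_mul_self.mp hA.nonneg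
  rw [star_eq_conjTranspose] at hA hA0 ⊢
  have hR : IsUnit R.det := by
    rw [det_mul] at hA0
    exact isUnit_iff_ne_zero.2 (right_ne_zero_of_mul hA0)
  have hfactor : Rᴴ * R + B = Rᴴ * (1 + (R⁻¹)ᴴ * B * R⁻¹) * R := by
    have hRR : Rᴴ * (R⁻¹)ᴴ = 1 := by
      rw [← conjTranspose_mul, nonsing_inv_mul _ hR, conjTranspose_one]
    simp only [mul_add, add_mul, mul_one, ← Matrix.mul_assoc, hRR, one_mul]
    rw [Matrix.mul_assoc B, nonsing_inv_mul _ hR, mul_one]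
  rw [hfactor, det_mul (Rᴴ * _), det_mul Rᴴ (1 + _), mul_right_comm, ← det_mul]
  exact le_mul_of_one_le_right hA.det_nonneg (hB.conjTranspose_mul_mul_same _).one_le_det_one_add

variable {ι R : Type*} [CommRing R]

theorem det_sum_smul_vecMulVec (s : Finset ι) (w : ι → R) (v : ι → n → R) :
    (∑ x ∈ s, w x • vecMulVec (v x) (v x)).det =
      ∑ φ ∈ Fintype.piFinset fun _ : n => s, (∏ i, w (φ i) * v (φ i) i) * (of (v ∘ φ)).det := by
  have hrows : (∑ x ∈ s, w x • vecMulVec (v x) (v x)) = fun i => ∑ x ∈ s, (w x * v x i) • v x := by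
    ext i j
    simp [Matrix.sum_apply, vecMulVec_apply, mul_assoc]
  rw [hrows]
  change (detRowAlternating : (n → R) [⋀^n]→ₗ[R] R).toMultilinearMap _ = _
  rw [MultilinearMap.map_sum_finset]
  refine Finset.sum_congr rfl fun φ _ => ?_
  rw [MultilinearMap.map_smul_univ]
  rfl

-- Cauchy–Binet for `∑ wₓ vₓ vₓᵀ`: each set of `card n` columns is counted once per ordering.
theorem factorial_mul_det_sum_smul_vecMulVec (s : Finset ι) (w : ι → R) (v : ι → n → R) :
    ((Fintype.card n).factorial : R) * (∑ x ∈ s, w x • vecMulVec (v x) (v x)).det =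
      ∑ φ ∈ Fintype.piFinset fun _ : n => s, (∏ i, w (φ i)) * (of (v ∘ φ)).det ^ 2 := by
  have hperm (φ : n → ι) (σ : Perm n) :
      (∏ i, w (φ (σ i)) * v (φ (σ i)) i) * (of (v ∘ φ ∘ σ)).det =
        (∏ i, w (φ i)) * (of (v ∘ φ)).det * (Perm.sign σ * ∏ i, v (φ (σ i)) i) := by
    rw [show of (v ∘ φ ∘ σ) = (of (v ∘ φ)).submatrix σ id from rfl, det_permute,
      prod_mul_distrib, Equiv.prod_comp σ (fun i => w (φ i))]
    ring
  calc ((Fintype.card n).factorial : R) * (∑ x ∈ s, w x • vecMulVec (v x) (v x)).det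
      = ∑ σ : Perm n, ∑ φ ∈ Fintype.piFinset fun _ : n => s,
          (∏ i, w (φ (σ i)) * v (φ (σ i)) i) * (of (v ∘ φ ∘ σ)).det := by
        rw [det_sum_smul_vecMulVec, ← Fintype.card_perm, ← card_univ, ← nsmul_eq_mul,
          ← sum_const]
        exact Finset.sum_congr rfl fun σ _ => (Fintype.sum_piFinset_comp_perm s σ _).symm
    _ = ∑ φ ∈ Fintype.piFinset fun _ : n => s,
          (∏ i, w (φ i)) * (of (v ∘ φ)).det * ∑ σ : Perm n, Perm.sign σ * ∏ i, v (φ (σ i)) i := by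
        rw [sum_comm]
        simp only [hperm, mul_sum]
    _ = _ := by
        refine Finset.sum_congr rfl fun φ _ => ?_
        rw [det_apply' (of (v ∘ φ))]
        simp [sq, mul_assoc]

end Matrix

namespace Design

variable {X : Type*}

theorem w_nonneg (ξ : Design X) (x : X) : 0 ≤ ξ.w x := by
  by_cases hx : x ∈ ξ.support
  · exact (ξ.w_pos x hx).le
  · exact (ξ.w_zero x hx).ge

theorem w_le_one (ξ : Design X) (x : X) : ξ.w x ≤ 1 := by
  by_cases hx : x ∈ ξ.support
  · exact ξ.sum_one ▸ single_le_sum (fun y _ => ξ.w_nonneg y) hx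
  · exact (ξ.w_zero x hx).trans_le zero_le_one

theorem sum_smul_eq_of_support_subset {M : Type*} [AddCommMonoid M] [Module ℝ M]
    (ξ : Design X) {s : Finset X} (hs : ξ.support ⊆ s) (g : X → M) :
    ∑ x ∈ s, ξ.w x • g x = ∑ x ∈ ξ.support, ξ.w x • g x :=
  (sum_subset hs fun x _ hx => by rw [ξ.w_zero x hx, zero_smul]).symm

noncomputable def mix [DecidableEq X] {M : ℕ} [NeZero M] (ξ : Fin M → Design X) : Design X where
  support := univ.biUnion fun i => (ξ i).support
  w x := (∑ i, (ξ i).w x) / M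
  w_pos x hx := by
    obtain ⟨i, -, hi⟩ := mem_biUnion.1 hx
    exact div_pos (sum_pos' (fun j _ => (ξ j).w_nonneg x) ⟨i, mem_univ i, (ξ i).w_pos x hi⟩)
      (Nat.cast_pos.2 (NeZero.pos M))
  w_zero x hx := by
    simp only [mem_biUnion, mem_univ, true_and, not_exists] at hx
    simp [fun i => (ξ i).w_zero x (hx i)]
  sum_one := by
    have hsub (i : Fin M) : (ξ i).support ⊆ univ.biUnion fun i => (ξ i).support :=
      subset_biUnion_of_mem (fun i => (ξ i).support) (mem_univ i)
    have h (i : Fin M) := (ξ i).sum_smul_eq_of_support_subset (hsub i) (fun _ => (1 : ℝ))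
    simp only [smul_eq_mul, mul_one, (ξ _).sum_one] at h
    rw [← sum_div, sum_comm, sum_congr rfl fun i _ => h i]
    simp [NeZero.ne M]

end Design

section InformationMatrix

variable {X : Type*} {m : ℕ} (f : X → ℝ → Fin m → ℝ)

theorem infoMat_posSemidef (ξ : Design X) (β : ℝ) : (infoMat f ξ β).PosSemidef :=
  posSemidef_sum _ fun x _ => by
    simpa using (posSemidef_vecMulVec_self_star (f x β)).smul (ξ.w_nonneg x)

theorem infoMat_mix [DecidableEq X] {M : ℕ} [NeZero M] (ξ : Fin M → Design X) (β : ℝ) :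
    infoMat f (Design.mix ξ) β = (M : ℝ)⁻¹ • ∑ i, infoMat f (ξ i) β := by
  simp only [infoMat, Design.mix, div_eq_inv_mul, mul_smul, sum_smul, ← smul_sum]
  rw [sum_comm]
  congr 1
  exact sum_congr rfl fun i _ => (ξ i).sum_smul_eq_of_support_subset
    (subset_biUnion_of_mem (fun i => (ξ i).support) (mem_univ i)) _

theorem inv_pow_mul_det_infoMat_le_det_infoMat_mix [DecidableEq X] {M : ℕ} [NeZero M]
    (ξ : Fin M → Design X) (β : ℝ) (i : Fin M) :
    ((M : ℝ)⁻¹) ^ m * (infoMat f (ξ i) β).det ≤ (infoMat f (Design.mix ξ) β).det := by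
  rw [infoMat_mix, det_smul, Fintype.card_fin, ← add_sum_erase _ _ (mem_univ i)]
  exact mul_le_mul_of_nonneg_left ((infoMat_posSemidef f _ β).det_le_det_add
    (posSemidef_sum _ fun j _ => infoMat_posSemidef f _ β)) (by positivity)

theorem detIm_eq_det_sq (xs : Fin m → X) (β : ℝ) :
    detIm f xs β = (of fun i => f (xs i) β).det ^ 2 := by
  rw [detIm, ← det_transpose]
  rfl

theorem det_infoMat_le_sum_detIm (ξ : Design X) (β : ℝ) :
    (infoMat f ξ β).det ≤ ∑ φ ∈ Fintype.piFinset fun _ : Fin m => ξ.support, detIm f φ β := by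
  have hCB := factorial_mul_det_sum_smul_vecMulVec ξ.support ξ.w (fun x => f x β)
  rw [Fintype.card_fin] at hCB
  calc (infoMat f ξ β).det ≤ (m.factorial : ℝ) * (infoMat f ξ β).det :=
        le_mul_of_one_le_left (infoMat_posSemidef f ξ β).det_nonneg
          (by exact_mod_cast m.factorial_pos)
    _ = ∑ φ ∈ Fintype.piFinset fun _ : Fin m => ξ.support,
          (∏ i, ξ.w (φ i)) * detIm f φ β := by
        rw [infoMat, hCB]
        simp only [detIm_eq_det_sq]
        rfl
    _ ≤ _ := sum_le_sum fun φ _ => mul_le_of_le_one_left (sq_nonneg _)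
        (prod_le_one (fun i _ => ξ.w_nonneg _) fun i _ => ξ.w_le_one _)

end InformationMatrix

section BayesianLoss

open MeasureTheory

theorem negLog_of_pos {r : ℝ} (hr : 0 < r) : negLog r = ENNReal.ofReal (-Real.log r) :=
  if_neg hr.not_ge

theorem negLog_of_nonpos {r : ℝ} (hr : r ≤ 0) : negLog r = ⊤ :=
  if_pos hr

theorem negLog_antitone : Antitone negLog := by
  intro r s hrs
  rcases le_or_gt r 0 with hr | hr
  · rw [negLog_of_nonpos hr]
    exact le_top
  rw [negLog_of_pos hr, negLog_of_pos (hr.trans_le hrs)]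
  exact ENNReal.ofReal_le_ofReal (neg_le_neg (Real.log_le_log hr hrs))

variable {α : Type*} [MeasurableSpace α] {μ : Measure α} {g : α → ℝ}

theorem setLIntegral_negLog_le [IsProbabilityMeasure μ] {s : Set α} {r : ℝ}
    (hs : MeasurableSet s) (hr : 0 < r) (hg : ∀ a ∈ s, r ≤ g a) :
    ∫⁻ a in s, negLog (g a) ∂μ ≤ ENNReal.ofReal (-Real.log r) :=
  calc ∫⁻ a in s, negLog (g a) ∂μ ≤ ∫⁻ _ in s, negLog r ∂μ :=
        setLIntegral_mono' hs fun a ha => negLog_antitone (hg a ha)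
    _ = negLog r * μ s := setLIntegral_const s _
    _ ≤ ENNReal.ofReal (-Real.log r) := by
        rw [negLog_of_pos hr]
        exact mul_le_of_le_one_right' prob_le_one

theorem ofReal_mul_le_setLIntegral_negLog {S s : Set α} {ρ : ℝ} (hS : MeasurableSet S)
    (hSs : S ⊆ s) (hρ : 0 < ρ) (hg : ∀ a ∈ S, g a ≤ ρ) :
    ENNReal.ofReal (-Real.log ρ) * μ S ≤ ∫⁻ a in s, negLog (g a) ∂μ :=
  calc ENNReal.ofReal (-Real.log ρ) * μ S = ∫⁻ _ in S, negLog ρ ∂μ := by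
        rw [setLIntegral_const, negLog_of_pos hρ]
    _ ≤ ∫⁻ a in S, negLog (g a) ∂μ := setLIntegral_mono' hS fun a ha => negLog_antitone (hg a ha)
    _ ≤ ∫⁻ a in s, negLog (g a) ∂μ := lintegral_mono_set hSs

end BayesianLoss

namespace StieltjesFunction

open MeasureTheory Set

variable (ℓ : StieltjesFunction ℝ)

theorem measure_Icc_of_continuous (hℓ : Continuous ℓ) (a b : ℝ) :
    ℓ.measure (Icc a b) = ENNReal.ofReal (ℓ b - ℓ a) := by
  rw [measure_Icc, hℓ.continuousWithinAt.leftLim_eq]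

theorem measure_Icc_inter_preimage_Icc_le (hℓ : Continuous ℓ) (a b c t : ℝ) :
    ℓ.measure (Icc a b ∩ ℓ ⁻¹' Icc (c - t) (c + t)) ≤ ENNReal.ofReal (2 * t) := by
  set B := Icc a b ∩ ℓ ⁻¹' Icc (c - t) (c + t)
  rcases B.eq_empty_or_nonempty with hB | hB
  · simp [hB]
  have hBc : IsCompact B :=
    isCompact_Icc.inter_right (isClosed_Icc.preimage hℓ)
  have hinf := hBc.sInf_mem hB
  have hsup := hBc.sSup_mem hB
  calc ℓ.measure B ≤ ℓ.measure (Icc (sInf B) (sSup B)) :=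
        measure_mono fun x hx => ⟨csInf_le hBc.bddBelow hx, le_csSup hBc.bddAbove hx⟩
    _ = ENNReal.ofReal (ℓ (sSup B) - ℓ (sInf B)) := ℓ.measure_Icc_of_continuous hℓ _ _
    _ ≤ ENNReal.ofReal (2 * t) := by
        apply ENNReal.ofReal_le_ofReal
        linarith [hinf.2.1, hsup.2.2]

theorem ofReal_sub_le_measure_diff_add {ι : Type*} (hℓ : Continuous ℓ) (P : Finset ι)
    (c : ι → ℝ) (a b t : ℝ) :
    ENNReal.ofReal (ℓ b - ℓ a) ≤
      ℓ.measure (Icc a b \ ⋃ p ∈ P, ℓ ⁻¹' Icc (c p - t) (c p + t)) +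
        P.card * ENNReal.ofReal (2 * t) :=
  calc ENNReal.ofReal (ℓ b - ℓ a) = ℓ.measure (Icc a b) := (ℓ.measure_Icc_of_continuous hℓ a b).symm
    _ ≤ ℓ.measure ((Icc a b \ ⋃ p ∈ P, ℓ ⁻¹' Icc (c p - t) (c p + t)) ∪
          ⋃ p ∈ P, Icc a b ∩ ℓ ⁻¹' Icc (c p - t) (c p + t)) := by
        rw [← inter_iUnion₂, sdiff_union_inter]
    _ ≤ ℓ.measure (Icc a b \ ⋃ p ∈ P, ℓ ⁻¹' Icc (c p - t) (c p + t)) +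
          ∑ p ∈ P, ℓ.measure (Icc a b ∩ ℓ ⁻¹' Icc (c p - t) (c p + t)) :=
        (measure_union_le _ _).trans (add_le_add_right (measure_biUnion_finset_le _ _) _)
    _ ≤ _ := by
        grw [Finset.sum_le_card_nsmul P _ _ fun p _ =>
          ℓ.measure_Icc_inter_preimage_Icc_le hℓ a b (c p) t, nsmul_eq_mul]

theorem exists_grid (hℓ : Continuous ℓ) {a b lam : ℝ} (hab : a ≤ b) (hlam : 0 < lam) :
    ∃ g : Fin (⌊(ℓ b - ℓ a) / lam⌋₊ + 1) → ℝ,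
      (∀ i, g i ∈ Icc a b) ∧ ∀ β ∈ Icc a b, ∃ i, |ℓ β - ℓ (g i)| ≤ lam := by
  have hval (i : Fin (⌊(ℓ b - ℓ a) / lam⌋₊ + 1)) :
      ℓ a + i * lam ∈ Icc (ℓ a) (ℓ b) := by
    have hi : (i : ℝ) ≤ (ℓ b - ℓ a) / lam :=
      (Nat.cast_le.2 (Nat.lt_succ_iff.1 i.isLt)).trans (Nat.floor_le (div_nonneg
        (sub_nonneg.2 (ℓ.mono hab)) hlam.le))
    rw [le_div_iff₀ hlam] at hi
    constructor <;> nlinarith [i.val.cast_nonneg (α := ℝ)]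
  choose g hg hgval using fun i => intermediate_value_Icc hab hℓ.continuousOn (hval i)
  refine ⟨g, hg, fun β hβ => ?_⟩
  have hs : 0 ≤ (ℓ β - ℓ a) / lam := div_nonneg (sub_nonneg.2 (ℓ.mono hβ.1)) hlam.le
  have hi : ⌊(ℓ β - ℓ a) / lam⌋₊ < ⌊(ℓ b - ℓ a) / lam⌋₊ + 1 :=
    Nat.lt_succ_of_le (Nat.floor_le_floor (div_le_div_of_nonneg_right
      (sub_le_sub_right (ℓ.mono hβ.2) _) hlam.le))
  refine ⟨⟨_, hi⟩, ?_⟩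
  rw [hgval]
  have h1 := Nat.floor_le hs
  have h2 := Nat.lt_floor_add_one ((ℓ β - ℓ a) / lam)
  rw [le_div_iff₀ hlam] at h1
  rw [div_lt_iff₀ hlam] at h2
  rw [abs_le]
  constructor <;> nlinarith

end StieltjesFunction

section Asymptotics

open Filter Real

theorem eventually_mul_log_add_lt_mul_rpow (b c : ℝ) {a γ : ℝ} (ha : 0 < a) (hγ : 0 < γ) :
    ∀ᶠ L : ℝ in atTop, b * log L + c < a * L ^ γ := by
  have hlog := ((isLittleO_log_rpow_atTop hγ).const_mul_left b).def (half_pos ha)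
  have hc := ((tendsto_rpow_atTop hγ).const_mul_atTop (half_pos ha)).eventually_gt_atTop c
  filter_upwards [hlog, hc, eventually_gt_atTop 0] with L hL hcL hL0
  rw [norm_of_nonneg (rpow_pos_of_pos hL0 γ).le] at hL
  linarith [le_norm_self (b * log L)]

theorem exists_pos_forall_ge_log_lt (m K : ℕ) (hK : 0 < K) {c lam γ : ℝ} (hc : 0 < c)
    (hlam : 0 < lam) (hγ : 0 < γ) (D : ℝ) :
    ∃ B₀ : ℝ, 0 < B₀ ∧ ∀ L ≥ B₀,
      log 2 + m * log (⌊L / lam⌋₊ + 1) < c * ((L / (4 * K)) ^ γ - D) := by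
  obtain ⟨B, hB⟩ := eventually_atTop.1 ((eventually_mul_log_add_lt_mul_rpow m
    (log 2 + m * log (2 / lam) + c * D) (mul_pos hc (inv_pos.2 (rpow_pos_of_pos
      (by positivity : (0 : ℝ) < 4 * K) γ))) hγ).and (eventually_ge_atTop lam))
  refine ⟨max B 1, by positivity, fun L hL => ?_⟩
  obtain ⟨hlt, hlamL⟩ := hB L (le_of_max_le_left hL)
  have hL0 : 0 < L := hlam.trans_le hlamL
  have hfloor : (⌊L / lam⌋₊ + 1 : ℝ) ≤ L * (2 / lam) := by
    have := Nat.floor_le (div_nonneg hL0.le hlam.le)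
    have := (one_le_div hlam).2 hlamL
    linarith [show L * (2 / lam) = L / lam + L / lam by ring]
  have hlog : log (⌊L / lam⌋₊ + 1) ≤ log L + log (2 / lam) := by
    rw [← log_mul hL0.ne' (by positivity)]
    exact log_le_log (by positivity) hfloor
  have hrhs : c * ((L / (4 * K)) ^ γ - D) = c * ((4 * K : ℝ) ^ γ)⁻¹ * L ^ γ - c * D := by
    rw [div_rpow hL0.le (by positivity)]
    ring
  rw [hrhs]
  linarith [mul_le_mul_of_nonneg_left hlog (Nat.cast_nonneg (α := ℝ) m)]

end Asymptotics

section BayesianDesign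

open MeasureTheory Set

variable {X : Type*} {m : ℕ} (f : X → ℝ → Fin m → ℝ) (ξopt : ℝ → Design X)

/-- `det M(ξ,β) / det M(ξ[β],β)`, so that `Q(β,β̃) = efficiency f ξopt (ξopt β̃) β`. -/
noncomputable def efficiency (ξ : Design X) (β : ℝ) : ℝ :=
  (infoMat f ξ β).det / (infoMat f (ξopt β) β).det

/-- The loss `−Ψ_st(ξ)` of the design `ξ` under the prior `π` on `s`. -/
noncomputable def bayesLoss (π : Measure ℝ) (s : Set ℝ) (ξ : Design X) : ℝ≥0∞ :=
  ∫⁻ β in s, negLog (efficiency f ξopt ξ β) ∂π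

theorem bayesLoss_mix_le [DecidableEq X] (π : Measure ℝ) [IsProbabilityMeasure π] {s : Set ℝ}
    (hs : MeasurableSet s) {M : ℕ} [NeZero M] (g : Fin M → ℝ)
    (hdet : ∀ β ∈ s, 0 < (infoMat f (ξopt β) β).det)
    (hcover : ∀ β ∈ s, ∃ i, 1 / 2 ≤ efficiency f ξopt (ξopt (g i)) β) :
    bayesLoss f ξopt π s (Design.mix fun i => ξopt (g i)) ≤
      ENNReal.ofReal (Real.log 2 + m * Real.log M) := by
  have hM : (0 : ℝ) < M := Nat.cast_pos.2 (NeZero.pos M)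
  have hr : 0 < 1 / 2 * ((M : ℝ)⁻¹) ^ m := by positivity
  have hbound (β : ℝ) (hβ : β ∈ s) :
      1 / 2 * ((M : ℝ)⁻¹) ^ m ≤ efficiency f ξopt (Design.mix fun i => ξopt (g i)) β := by
    obtain ⟨i, hi⟩ := hcover β hβ
    rw [efficiency, le_div_iff₀ (hdet β hβ)] at hi ⊢
    calc 1 / 2 * ((M : ℝ)⁻¹) ^ m * (infoMat f (ξopt β) β).det
        ≤ ((M : ℝ)⁻¹) ^ m * (infoMat f (ξopt (g i)) β).det := by
          rw [mul_comm _ (_ ^ m), mul_assoc]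
          exact mul_le_mul_of_nonneg_left hi (by positivity)
      _ ≤ _ := inv_pow_mul_det_infoMat_le_det_infoMat_mix f (fun i => ξopt (g i)) β i
  calc bayesLoss f ξopt π s (Design.mix fun i => ξopt (g i))
      ≤ ENNReal.ofReal (-Real.log (1 / 2 * ((M : ℝ)⁻¹) ^ m)) :=
        setLIntegral_negLog_le hs hr hbound
    _ = ENNReal.ofReal (Real.log 2 + m * Real.log M) := by
        rw [Real.log_mul (by norm_num) (pow_ne_zero _ (inv_ne_zero hM.ne')), Real.log_pow,
          Real.log_inv, one_div, Real.log_inv]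
        ring_nf

theorem exists_bayesLoss_le (π : Measure ℝ) [IsProbabilityMeasure π] (ℓ : StieltjesFunction ℝ)
    (hℓ : Continuous ℓ) {βmin βmax lam : ℝ} (hβ : βmin ≤ βmax) (hlam : 0 < lam)
    (hdet : ∀ β ∈ Icc βmin βmax, 0 < (infoMat f (ξopt β) β).det)
    (hQ : ∀ β ∈ Icc βmin βmax, ∀ b ∈ Icc βmin βmax,
      |ℓ β - ℓ b| ≤ lam → 1 / 2 ≤ efficiency f ξopt (ξopt b) β) :
    ∃ ξ, bayesLoss f ξopt π (Icc βmin βmax) ξ ≤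
      ENNReal.ofReal (Real.log 2 + m * Real.log (⌊(ℓ βmax - ℓ βmin) / lam⌋₊ + 1)) := by
  classical
  obtain ⟨g, hg, hcover⟩ := ℓ.exists_grid hℓ hβ hlam
  refine ⟨_, (bayesLoss_mix_le f ξopt π measurableSet_Icc g hdet fun β hβ => ?_).trans_eq ?_⟩
  · obtain ⟨i, hi⟩ := hcover β hβ
    exact ⟨i, hQ β hβ (g i) (hg i) hi⟩
  · push_cast
    rfl

theorem efficiency_le_of_detIm_le (ξ : Design X) {c₀ ε β : ℝ} (hc₀ : 0 ≤ c₀)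
    (hdet : 0 < (infoMat f (ξopt β) β).det) (b : (Fin m → X) → Fin m → ℝ)
    (h29 : ∀ φ, detIm f φ β ≤ c₀ * ∑ j, (infoMat f (ξopt (b φ j)) β).det)
    (hε : ∀ φ ∈ Fintype.piFinset fun _ : Fin m => ξ.support, ∀ j,
      efficiency f ξopt (ξopt (b φ j)) β ≤ ε) :
    efficiency f ξopt ξ β ≤ c₀ * (ξ.support.card ^ m * m) * ε := by
  set Φ := Fintype.piFinset fun _ : Fin m => ξ.support
  calc efficiency f ξopt ξ β ≤ (∑ φ ∈ Φ, detIm f φ β) / (infoMat f (ξopt β) β).det :=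
        div_le_div_of_nonneg_right (det_infoMat_le_sum_detIm f ξ β) hdet.le
    _ ≤ (∑ φ ∈ Φ, c₀ * ∑ j, (infoMat f (ξopt (b φ j)) β).det) / (infoMat f (ξopt β) β).det :=
        div_le_div_of_nonneg_right (Finset.sum_le_sum fun φ _ => h29 φ) hdet.le
    _ = c₀ * ∑ φ ∈ Φ, ∑ j, efficiency f ξopt (ξopt (b φ j)) β := by
        simp only [efficiency, ← Finset.sum_div, ← Finset.mul_sum, mul_div_assoc]
    _ ≤ c₀ * ∑ φ ∈ Φ, ∑ _j : Fin m, ε :=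
        mul_le_mul_of_nonneg_left (Finset.sum_le_sum fun φ hφ =>
          Finset.sum_le_sum fun j _ => hε φ hφ j) hc₀
    _ = c₀ * (ξ.support.card ^ m * m) * ε := by
        simp [Φ, Fintype.card_piFinset]
        ring

theorem ofReal_le_prior_diff_iUnion {ι : Type*} (π : Measure ℝ) (ℓ : StieltjesFunction ℝ)
    (hℓ : Continuous ℓ) {βmin βmax c₃ : ℝ} (hL : 0 < ℓ βmax - ℓ βmin)
    (hπ : ∀ S ⊆ Icc βmin βmax, MeasurableSet S →
      ENNReal.ofReal c₃ * ℓ.measure S ≤ ENNReal.ofReal (ℓ βmax - ℓ βmin) * π S)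
    (P : Finset ι) (c : ι → ℝ) {K : ℕ} (hP : P.card ≤ K) :
    ENNReal.ofReal (c₃ / 2) ≤ π (Icc βmin βmax \ ⋃ p ∈ P,
      ℓ ⁻¹' Icc (c p - (ℓ βmax - ℓ βmin) / (4 * K)) (c p + (ℓ βmax - ℓ βmin) / (4 * K))) := by
  set L := ℓ βmax - ℓ βmin
  set S := Icc βmin βmax \ ⋃ p ∈ P, ℓ ⁻¹' Icc (c p - L / (4 * K)) (c p + L / (4 * K))
  have hS : MeasurableSet S :=
    measurableSet_Icc.diff (P.measurableSet_biUnion fun p _ => hℓ.measurable measurableSet_Icc)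
  have hbands : (P.card : ℝ≥0∞) * ENNReal.ofReal (2 * (L / (4 * K))) ≤ ENNReal.ofReal (L / 2) := by
    rw [← ENNReal.ofReal_natCast, ← ENNReal.ofReal_mul (Nat.cast_nonneg _)]
    refine ENNReal.ofReal_le_ofReal ?_
    rcases K.eq_zero_or_pos with rfl | hK
    · simpa [Finset.card_eq_zero.1 (Nat.le_zero.1 hP)] using (half_pos hL).le
    calc (P.card : ℝ) * (2 * (L / (4 * K))) ≤ K * (2 * (L / (4 * K))) := by gcongr
      _ = L / 2 := by field_simp; ring
  have hμS : ENNReal.ofReal (L / 2) ≤ ℓ.measure S := by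
    refine (ENNReal.add_le_add_iff_right (ENNReal.ofReal_ne_top (r := L / 2))).1 ?_
    rw [← ENNReal.ofReal_add (half_pos hL).le (half_pos hL).le, add_halves]
    exact (ℓ.ofReal_sub_le_measure_diff_add hℓ P c βmin βmax (L / (4 * K))).trans
      (add_le_add_right hbands _)
  refine (ENNReal.mul_le_mul_iff_right (ENNReal.ofReal_pos.2 hL).ne' ENNReal.ofReal_ne_top).1 ?_
  calc ENNReal.ofReal L * ENNReal.ofReal (c₃ / 2) = ENNReal.ofReal c₃ * ENNReal.ofReal (L / 2) := by
        rw [← ENNReal.ofReal_mul hL.le, ← ENNReal.ofReal_mul' (half_pos hL).le]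
        ring_nf
    _ ≤ ENNReal.ofReal c₃ * ℓ.measure S := by gcongr
    _ ≤ ENNReal.ofReal L * π S := hπ S sdiff_subset hS

theorem ofReal_le_bayesLoss (π : Measure ℝ) (ℓ : StieltjesFunction ℝ) (hℓ : Continuous ℓ)
    {βmin βmax c₀ c₁ c₃ γ : ℝ} (hc₀ : 0 < c₀) (hc₁ : 0 < c₁) (hc₃ : 0 ≤ c₃) (hγ : 0 ≤ γ)
    (hL : 0 < ℓ βmax - ℓ βmin)
    (hdet : ∀ β ∈ Icc βmin βmax, 0 < (infoMat f (ξopt β) β).det)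
    (hdecay : ∀ β ∈ Icc βmin βmax, ∀ b ∈ Icc βmin βmax,
      efficiency f ξopt (ξopt b) β ≤ c₁ * Real.exp (-(|ℓ β - ℓ b| ^ γ)))
    (b : (Fin m → X) → Fin m → ℝ) (hb : ∀ φ j, b φ j ∈ Icc βmin βmax)
    (h29 : ∀ φ, ∀ β ∈ Icc βmin βmax, detIm f φ β ≤ c₀ * ∑ j, (infoMat f (ξopt (b φ j)) β).det)
    (hπ : ∀ S ⊆ Icc βmin βmax, MeasurableSet S →
      ENNReal.ofReal c₃ * ℓ.measure S ≤ ENNReal.ofReal (ℓ βmax - ℓ βmin) * π S)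
    (ξ : Design X) {K : ℕ} (hK : 0 < K) (hξ : ξ.support.card ^ m * m ≤ K) :
    ENNReal.ofReal (c₃ / 2 * (((ℓ βmax - ℓ βmin) / (4 * K)) ^ γ - Real.log (c₀ * c₁ * K))) ≤
      bayesLoss f ξopt π (Icc βmin βmax) ξ := by
  set t := (ℓ βmax - ℓ βmin) / (4 * K)
  set P := (Fintype.piFinset fun _ : Fin m => ξ.support) ×ˢ (Finset.univ : Finset (Fin m))
  set S := Icc βmin βmax \ ⋃ p ∈ P, ℓ ⁻¹' Icc (ℓ (b p.1 p.2) - t) (ℓ (b p.1 p.2) + t)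
  have hP : P.card ≤ K := by simpa [P, Fintype.card_piFinset] using hξ
  have hS : MeasurableSet S :=
    measurableSet_Icc.diff (P.measurableSet_biUnion fun p _ => hℓ.measurable measurableSet_Icc)
  set ρ := c₀ * c₁ * K * Real.exp (-(t ^ γ))
  have hρ : 0 < ρ := by positivity
  have heff : ∀ β ∈ S, efficiency f ξopt ξ β ≤ ρ := by
    rintro β ⟨hβ, hfar⟩
    refine (efficiency_le_of_detIm_le f ξopt ξ hc₀.le (hdet β hβ) b (fun φ => h29 φ β hβ)
      (ε := c₁ * Real.exp (-(t ^ γ))) fun φ hφ j => ?_).trans ?_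
    · have hband : ℓ β ∉ Icc (ℓ (b φ j) - t) (ℓ (b φ j) + t) := fun h =>
        hfar (mem_iUnion₂.2 ⟨(φ, j), Finset.mem_product.2 ⟨hφ, Finset.mem_univ j⟩, h⟩)
      rw [← mem_Icc_iff_abs_le, not_le, abs_sub_comm] at hband
      refine (hdecay β hβ _ (hb φ j)).trans ?_
      gcongr
    · calc _ ≤ c₀ * K * (c₁ * Real.exp (-(t ^ γ))) := by gcongr; exact_mod_cast hξ
        _ = ρ := by ring
  have hlog : -Real.log ρ = t ^ γ - Real.log (c₀ * c₁ * K) := by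
    rw [Real.log_mul (by positivity) (Real.exp_pos _).ne', Real.log_exp]
    ring
  calc ENNReal.ofReal (c₃ / 2 * (t ^ γ - Real.log (c₀ * c₁ * K)))
      = ENNReal.ofReal (-Real.log ρ) * ENNReal.ofReal (c₃ / 2) := by
        rw [hlog, mul_comm, ENNReal.ofReal_mul' (by positivity)]
    _ ≤ ENNReal.ofReal (-Real.log ρ) * π S := by
        gcongr
        exact ofReal_le_prior_diff_iUnion π ℓ hℓ hL hπ P _ hP
    _ ≤ bayesLoss f ξopt π (Icc βmin βmax) ξ :=
        ofReal_mul_le_setLIntegral_negLog hS sdiff_subset hρ heff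

end BayesianDesign

/-- For every `m ≥ 1`, `N`, and constants `c₀, c₁, c₃, λ, γ > 0`, there is `B₀ > 0` such
that for every design problem satisfying (2.9), (2.5), the exponential decay condition
`Q(β,β̃) ≤ c₁ exp(−|ℓ(β) − ℓ(β̃)|^γ)`, and every prior `π` with
`π(S) ≥ c₃ μ_ℓ(S)/μ_ℓ(ℬ)`, if `μ_ℓ(ℬ) = ℓ(β_max) − ℓ(β_min) ≥ B₀` then any Bayesian
`D`-optimal design has more than `N` support points. -/
theorem bayesian_support_points_unbounded
    (m : ℕ) (hm : 1 ≤ m) (N : ℕ) (c₀ c₁ c₃ lam γ : ℝ)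
    (hc₀ : 0 < c₀) (hc₁ : 0 < c₁) (hc₃ : 0 < c₃) (hlam : 0 < lam) (hγ : 0 < γ) :
    ∃ B₀ : ℝ, 0 < B₀ ∧
      ∀ (X : Type) [Nonempty X] (βmin βmax : ℝ), βmin < βmax →
        ∀ (f : X → ℝ → Fin m → ℝ) (ℓ : StieltjesFunction ℝ) (ξopt : ℝ → Design X)
          (π : MeasureTheory.Measure ℝ) [MeasureTheory.IsProbabilityMeasure π],
          -- ℓ is a (nondecreasing, by definition of a Stieltjes function) continuous scale
          Continuous ℓ →
          -- measurability of the criterion (guaranteed in the context by continuity of f)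
          (∀ x : X, Continuous (f x)) →
          Measurable (fun β : ℝ => (infoMat f (ξopt β) β).det) →
          -- π is a Borel probability measure on ℬ
          π (Set.Icc βmin βmax) = 1 →
          -- local D-optimality of the designs ξ[β], with nonsingular information matrix
          (∀ β ∈ Set.Icc βmin βmax, 0 < (infoMat f (ξopt β) β).det) →
          (∀ β ∈ Set.Icc βmin βmax, ∀ ξ : Design X,
              (infoMat f ξ β).det ≤ (infoMat f (ξopt β) β).det) →
          -- exponential decay condition (4.2):  Q(β,β̃) ≤ c₁ exp(−|ℓ(β) − ℓ(β̃)|^γ)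
          (∀ β ∈ Set.Icc βmin βmax, ∀ b ∈ Set.Icc βmin βmax,
              (infoMat f (ξopt b) β).det / (infoMat f (ξopt β) β).det
                ≤ c₁ * Real.exp (-(|ℓ β - ℓ b| ^ γ))) →
          -- condition (2.5):  Q(β,β̃) ≥ 1/2 whenever |ℓ(β) − ℓ(β̃)| ≤ λ
          (∀ β ∈ Set.Icc βmin βmax, ∀ b ∈ Set.Icc βmin βmax,
              |ℓ β - ℓ b| ≤ lam →
              (1 : ℝ) / 2 ≤ (infoMat f (ξopt b) β).det / (infoMat f (ξopt β) β).det) →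
          -- condition (2.9)
          (∀ xs : Fin m → X, ∃ b : Fin m → ℝ,
              (∀ j, b j ∈ Set.Icc βmin βmax) ∧
              ∀ β ∈ Set.Icc βmin βmax,
                detIm f xs β ≤ c₀ * ∑ j, (infoMat f (ξopt (b j)) β).det) →
          -- condition (4.3):  π(S) ≥ c₃ μ_ℓ(S)/μ_ℓ(ℬ) for all Borel S ⊆ ℬ
          (∀ S : Set ℝ, S ⊆ Set.Icc βmin βmax → MeasurableSet S →
              ENNReal.ofReal c₃ * ℓ.measure S
                ≤ ENNReal.ofReal (ℓ βmax - ℓ βmin) * π S) →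
          -- μ_ℓ(ℬ) = ℓ(β_max) − ℓ(β_min) sufficiently large
          B₀ ≤ ℓ βmax - ℓ βmin →
          -- any maximizer of Ψ_st(ξ) = ∫ log(det M(ξ,β)/det M(ξ[β],β)) dπ, i.e. any
          -- minimizer of the corresponding (possibly infinite) nonnegative loss integral
          ∀ ξstar : Design X,
            (∀ ξ : Design X,
              (∫⁻ β in Set.Icc βmin βmax,
                  negLog ((infoMat f ξstar β).det / (infoMat f (ξopt β) β).det) ∂π) ≤
              (∫⁻ β in Set.Icc βmin βmax,
                  negLog ((infoMat f ξ β).det / (infoMat f (ξopt β) β).det) ∂π)) →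
            N < ξstar.support.card := by
  have hK0 : 0 < (N + 1) ^ m * m := Nat.mul_pos (by positivity) hm
  obtain ⟨B₀, hB₀, hB⟩ := exists_pos_forall_ge_log_lt m _ hK0 (half_pos hc₃) hlam hγ
    (Real.log (c₀ * c₁ * ((N + 1) ^ m * m : ℕ)))
  refine ⟨B₀, hB₀, fun X _ βmin βmax hβ f ℓ ξopt π _ hℓ _ _ _ hdet _ hdecay hQ h29 hπ hL
    ξstar hstar => ?_⟩
  by_contra! hcard
  choose b hb h29 using h29
  have hK : ξstar.support.card ^ m * m ≤ (N + 1) ^ m * m := by gcongr; omega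
  obtain ⟨ξ, hξ⟩ := exists_bayesLoss_le f ξopt π ℓ hℓ hβ.le hlam hdet hQ
  have hlower := ofReal_le_bayesLoss f ξopt π ℓ hℓ hc₀ hc₁ hc₃.le hγ.le (hB₀.trans_le hL) hdet
    hdecay b hb h29 hπ ξstar hK0 hK
  have hUB : 0 ≤ Real.log 2 + m * Real.log (⌊(ℓ βmax - ℓ βmin) / lam⌋₊ + 1) :=
    add_nonneg (Real.log_nonneg one_le_two) (mul_nonneg m.cast_nonneg
      (Real.log_nonneg (le_add_of_nonneg_left (Nat.cast_nonneg _))))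
  exact (hB _ hL).not_ge
    ((ENNReal.ofReal_le_ofReal_iff hUB).1 (hlower.trans ((hstar ξ).trans hξ)))
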